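/- arXiv:2305.00306 — 2 statements merged into one kernel-verified Lean document; each statement's English description precedes it below -/
import Mathlib

section
/- Let A ⊆ T be nonempty. Then the operator Γ_A is idempotent: Γ_A(Γ_A(α)) = Γ_A(α) for every multifunction α. -/
open Set

/-- Restriction of a set `F` of functions (elements of `Z`) to the set `A ⊆ T`:
`F|_A = {f|_A : f ∈ F}`. -/
def resSet {T X : Type*} {Z : Set (T → X)} (A : Set T) (F : Set ↥Z) : Set (↥A → X) :=
  (fun h : ↥Z => A.restrict (h : T → X)) '' F

/-- A multifunction `z : Ω → 𝒫(Z)` is `A`-non-anticipative if `ω|_A = ω'|_A` implies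
`z(ω)|_A = z(ω')|_A`. -/
def NonAnt {T X Y : Type*} (Ω : Set (T → Y)) (Z : Set (T → X)) (A : Set T)
    (z : ↥Ω → Set ↥Z) : Prop :=
  ∀ ω ω' : ↥Ω, A.restrict (ω : T → Y) = A.restrict (ω' : T → Y) →
    resSet A (z ω) = resSet A (z ω')

/-- `N_ℋ(α)`: the set of `ℋ`-non-anticipative multiselectors of `α`. -/
def Nna {T X Y : Type*} (Ω : Set (T → Y)) (Z : Set (T → X)) (ℋ : Set (Set T))
    (α : ↥Ω → Set ↥Z) : Set (↥Ω → Set ↥Z) :=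
  {z | (∀ A ∈ ℋ, NonAnt Ω Z A z) ∧ ∀ ω, z ω ⊆ α ω}

/-- `N°_ℋ(α)`: the set of nonempty-valued `ℋ`-non-anticipative multiselectors of `α`. -/
def NnaNE {T X Y : Type*} (Ω : Set (T → Y)) (Z : Set (T → X)) (ℋ : Set (Set T))
    (α : ↥Ω → Set ↥Z) : Set (↥Ω → Set ↥Z) :=
  {z ∈ Nna Ω Z ℋ α | ∀ ω, (z ω).Nonempty}

/-- The operator `Γ_A`:
`Γ_A(α)(ω) = {h ∈ α(ω) : h|_A ∈ ⋂_{ω' ∈ Ω, ω'|_A = ω|_A} α(ω')|_A}`. -/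
def Gamma {T X Y : Type*} (Ω : Set (T → Y)) (Z : Set (T → X)) (A : Set T)
    (α : ↥Ω → Set ↥Z) : ↥Ω → Set ↥Z :=
  fun ω => {h ∈ α ω |
    A.restrict (h : T → X) ∈
      ⋂ ω' ∈ {η : ↥Ω | A.restrict (η : T → Y) = A.restrict (ω : T → Y)}, resSet A (α ω')}

section Gamma

variable {T X Y : Type*} {Ω : Set (T → Y)} {Z : Set (T → X)} {A : Set T} {α : ↥Ω → Set ↥Z}

theorem mem_resSet {F : Set ↥Z} {f : ↥A → X} :
    f ∈ resSet A F ↔ ∃ g ∈ F, A.domRestrict (g : T → X) = f :=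
  Iff.rfl

theorem mem_Gamma {ω : ↥Ω} {h : ↥Z} :
    h ∈ Gamma Ω Z A α ω ↔ h ∈ α ω ∧ ∀ ω' : ↥Ω, A.domRestrict (ω' : T → Y) =
      A.domRestrict (ω : T → Y) → A.domRestrict (h : T → X) ∈ resSet A (α ω') := by
  simp only [Gamma, mem_ofPred_eq, mem_iInter]
  rfl

theorem Gamma_subset (ω : ↥Ω) : Gamma Ω Z A α ω ⊆ α ω := fun _ hh => (mem_Gamma.1 hh).1

/-- A witness `g ∈ α ω'` with `g|_A = h|_A` already lies in `Γ_A(α)(ω')`, since every `ω''`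
agreeing with `ω'` on `A` also agrees with `ω` there. -/
theorem restrict_mem_resSet_Gamma {ω ω' : ↥Ω} {h : ↥Z} (hh : h ∈ Gamma Ω Z A α ω)
    (hω' : A.domRestrict (ω' : T → Y) = A.domRestrict (ω : T → Y)) :
    A.domRestrict (h : T → X) ∈ resSet A (Gamma Ω Z A α ω') := by
  have hI := (mem_Gamma.1 hh).2
  obtain ⟨g, hg, hgh⟩ := mem_resSet.1 (hI ω' hω')
  refine ⟨g, mem_Gamma.2 ⟨hg, fun ω'' hω'' => ?_⟩, hgh⟩
  exact hgh ▸ hI ω'' (hω''.trans hω')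

end Gamma

theorem stmt6_general {T X Y : Type*}
    (Ω : Set (T → Y)) (Z : Set (T → X))
    (A : Set T) (α : ↥Ω → Set ↥Z) :
    Gamma Ω Z A (Gamma Ω Z A α) = Gamma Ω Z A α := by
  funext ω
  refine Subset.antisymm (Gamma_subset ω) fun h hh => mem_Gamma.2 ⟨hh, fun ω' hω' => ?_⟩
  exact restrict_mem_resSet_Gamma hh hω'

/-- The operator `Γ_A` is idempotent. -/
theorem stmt6 {T X Y : Type*} [Nonempty T] [Nonempty X] [Nonempty Y]
    (Ω : Set (T → Y)) (Z : Set (T → X)) (hΩ : Ω.Nonempty) (hZ : Z.Nonempty)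
    (A : Set T) (hA : A.Nonempty) (α : ↥Ω → Set ↥Z) :
    Gamma Ω Z A (Gamma Ω Z A α) = Gamma Ω Z A α :=
  stmt6_general Ω Z A α
end

section
/- Let 𝒯 := {[t₀, τ] : τ ∈ [t₀, ϑ]} and let α be a multifunction. If there exists a 𝒯-non-anticipative multiselector of α with nonempty values (i.e., N°_𝒯(α) ≠ ∅), then the conditions (α, Δ) are feasible for every partition Δ of T. -/
open Set

/-- `H_i = [τ₀, τ_i]` (as a subset of `T = [t₀, ϑ]`), for `i = 1, …, n`
(here `i : Fin n` corresponds to the instant `τ (i+1)`). -/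
def Hset (t₀ ϑ : ℝ) {n : ℕ} (τ : Fin (n + 1) → ℝ) (i : Fin n) :
    Set ↥(Set.Icc t₀ ϑ) :=
  {t | (t : ℝ) ≤ τ i.succ}

/-- The family `ℋ_Δ = {H_1, …, H_n}`. -/
def HΔ (t₀ ϑ : ℝ) {n : ℕ} (τ : Fin (n + 1) → ℝ) : Set (Set ↥(Set.Icc t₀ ϑ)) :=
  {S | ∃ i : Fin n, S = Hset t₀ ϑ τ i}

/-- Feasibility of the conditions `(α, Δ)` for the partition
`Δ = {t₀ = τ 0 < τ 1 < ⋯ < τ n = ϑ}`: there is a tuple `φ_1, …, φ_n` of multiselectors of `α`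
such that for every `(ω_1,…,ω_n) ∈ Ω_Δ` one has `(φ_1(ω_1),…,φ_n(ω_n)) ∈ Z_Δ`. -/
def Feasible {X Y : Type*} (t₀ ϑ : ℝ) (Ω : Set (↥(Set.Icc t₀ ϑ) → Y))
    (Z : Set (↥(Set.Icc t₀ ϑ) → X)) (α : ↥Ω → Set ↥Z)
    {n : ℕ} (τ : Fin (n + 1) → ℝ) : Prop :=
  ∃ φ : Fin n → (↥Ω → Set ↥Z),
    (∀ i, ∀ ω, φ i ω ⊆ α ω) ∧
    ∀ ωs : Fin n → ↥Ω,
      (∀ i j : Fin n, (j : ℕ) = (i : ℕ) + 1 →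
          (Hset t₀ ϑ τ i).restrict (ωs i).1 = (Hset t₀ ϑ τ i).restrict (ωs j).1) →
      ((∀ i, (φ i (ωs i)).Nonempty) ∧
        ∀ i j : Fin n, (j : ℕ) = (i : ℕ) + 1 →
          resSet (Hset t₀ ϑ τ i) (φ i (ωs i)) = resSet (Hset t₀ ϑ τ i) (φ j (ωs j)))

theorem NnaNE_anti {T X Y : Type*} {Ω : Set (T → Y)} {Z : Set (T → X)} {ℋ ℋ' : Set (Set T)}
    {α : ↥Ω → Set ↥Z} (hℋ : ℋ' ⊆ ℋ) : NnaNE Ω Z ℋ α ⊆ NnaNE Ω Z ℋ' α :=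
  fun _ ⟨⟨hna, hsub⟩, hne⟩ => ⟨⟨fun A hA => hna A (hℋ hA), hsub⟩, hne⟩

theorem HΔ_subset_initialSegments {t₀ ϑ : ℝ} {n : ℕ} {τ : Fin (n + 1) → ℝ}
    (hmono : Monotone τ) (h0 : τ 0 = t₀) (hlast : τ (Fin.last n) = ϑ) :
    HΔ t₀ ϑ τ ⊆ {S : Set ↥(Set.Icc t₀ ϑ) | ∃ τ' : ↥(Set.Icc t₀ ϑ),
      S = {t : ↥(Set.Icc t₀ ϑ) | (t : ℝ) ≤ (τ' : ℝ)}} := by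
  rintro _ ⟨i, rfl⟩
  refine ⟨⟨τ i.succ, ?_, ?_⟩, rfl⟩
  · exact h0 ▸ hmono (Fin.zero_le _)
  · exact hlast ▸ hmono (Fin.le_last _)

/-- The constant tuple `φ_i := z` witnesses feasibility. -/
theorem feasible_of_mem_NnaNE_HΔ {X Y : Type*} {t₀ ϑ : ℝ}
    {Ω : Set (↥(Set.Icc t₀ ϑ) → Y)} {Z : Set (↥(Set.Icc t₀ ϑ) → X)} {α : ↥Ω → Set ↥Z}
    {n : ℕ} {τ : Fin (n + 1) → ℝ} {z : ↥Ω → Set ↥Z} (hz : z ∈ NnaNE Ω Z (HΔ t₀ ϑ τ) α) :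
    Feasible t₀ ϑ Ω Z α τ := by
  obtain ⟨⟨hna, hsub⟩, hne⟩ := hz
  refine ⟨fun _ => z, fun _ => hsub, fun ωs hcompat => ⟨fun i => hne (ωs i), ?_⟩⟩
  exact fun i j hij => hna _ ⟨i, rfl⟩ (ωs i) (ωs j) (hcompat i j hij)

theorem stmt14_general {X Y : Type*} (t₀ ϑ : ℝ)
    (Ω : Set (↥(Set.Icc t₀ ϑ) → Y)) (Z : Set (↥(Set.Icc t₀ ϑ) → X))
    (α : ↥Ω → Set ↥Z)
    (h : (NnaNE Ω Z
        {S : Set ↥(Set.Icc t₀ ϑ) | ∃ τ : ↥(Set.Icc t₀ ϑ),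
          S = {t : ↥(Set.Icc t₀ ϑ) | (t : ℝ) ≤ (τ : ℝ)}} α).Nonempty) :
    ∀ (n : ℕ), 1 ≤ n → ∀ τ : Fin (n + 1) → ℝ, StrictMono τ → τ 0 = t₀ →
      τ (Fin.last n) = ϑ → Feasible t₀ ϑ Ω Z α τ := by
  intro n _ τ hmono h0 hlast
  obtain ⟨z, hz⟩ := h
  exact feasible_of_mem_NnaNE_HΔ
    (NnaNE_anti (HΔ_subset_initialSegments hmono.monotone h0 hlast) hz)

/-- Let `𝒯 = {[t₀, τ] : τ ∈ [t₀, ϑ]}`. If `N°_𝒯(α) ≠ ∅`, then the conditions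
`(α, Δ)` are feasible for every partition `Δ` of `T = [t₀, ϑ]`. -/
theorem stmt14 {X Y : Type*} [Nonempty X] [Nonempty Y] (t₀ ϑ : ℝ)
    (Ω : Set (↥(Set.Icc t₀ ϑ) → Y)) (Z : Set (↥(Set.Icc t₀ ϑ) → X))
    (hΩ : Ω.Nonempty) (hZ : Z.Nonempty)
    (α : ↥Ω → Set ↥Z)
    (h : (NnaNE Ω Z
        {S : Set ↥(Set.Icc t₀ ϑ) | ∃ τ : ↥(Set.Icc t₀ ϑ),
          S = {t : ↥(Set.Icc t₀ ϑ) | (t : ℝ) ≤ (τ : ℝ)}} α).Nonempty) :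
    ∀ (n : ℕ), 1 ≤ n → ∀ τ : Fin (n + 1) → ℝ, StrictMono τ → τ 0 = t₀ →
      τ (Fin.last n) = ϑ → Feasible t₀ ϑ Ω Z α τ :=
  stmt14_general t₀ ϑ Ω Z α h
end
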